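/- arXiv:math/9802132 — 3 statements merged into one kernel-verified Lean document; each statement's English description precedes it below -/
import Mathlib

section
/- Let μ be a probability measure on a countable group G acting on a compact space, and λ a μ-stationary probability measure. If the set A_m of atoms of λ of maximal weight m > 0 is finite and nonempty, then A_m is invariant under the group generated by the support of μ. -/
open MeasureTheory
open scoped Pointwise

/-- If the set of atoms of maximal weight `m > 0` of a `μ`-stationary probability measure is
finite and nonempty, then it is invariant under the group generated by the support of `μ`. -/
theorem stationary_max_atoms_invariant
    {G X : Type*} [Group G] [Countable G] [MeasurableSpace X] [MeasurableSingletonClass X]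
    [MulAction G X] (hact : ∀ g : G, Measurable (fun x : X => g • x))
    (μ : G → ENNReal) (hμ : ∑' g, μ g = 1)
    (lam : Measure X) [IsProbabilityMeasure lam]
    (hstat : ∀ A : Set X, MeasurableSet A → lam A = ∑' g : G, μ g * lam ((g⁻¹ : G) • A))
    (m : ENNReal) (hm : 0 < m)
    (hmax : ∀ x : X, lam {x} ≤ m)
    (hfin : ({x : X | lam {x} = m}).Finite)
    (hne : ({x : X | lam {x} = m}).Nonempty) :
    ∀ g ∈ Subgroup.closure {h : G | μ h ≠ 0},
      g • {x : X | lam {x} = m} = {x : X | lam {x} = m} := by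
  set A : Set X := {x : X | lam {x} = m} with hA
  have hmtop : m ≠ ⊤ := by
    obtain ⟨x, hx⟩ := hne
    rw [← hx]
    exact (measure_lt_top lam {x}).ne
  have key : ∀ x ∈ A, ∀ g : G, μ g ≠ 0 → (g⁻¹ • x) ∈ A := by
    intro x hx g hg
    have h1 := hstat {x} (measurableSet_singleton x)
    simp only [Set.smul_set_singleton] at h1
    have hx' : lam {x} = m := hx
    have hsum : (∑' g : G, μ g * m) = m := by
      rw [ENNReal.tsum_mul_right, hμ, one_mul]
    by_contra hcon
    have hlt : lam {(g⁻¹ : G) • x} < m :=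
      lt_of_le_of_ne (hmax _) hcon
    have hstrict : (∑' g' : G, μ g' * lam {(g'⁻¹ : G) • x}) < ∑' g' : G, μ g' * m := by
      refine ENNReal.tsum_lt_tsum (i := g) ?_ ?_ ?_
      · rw [← h1, hx']; exact hmtop
      · intro g'
        exact mul_le_mul_right (hmax _) _
      · refine ENNReal.mul_lt_mul_iff_right hg ?_ |>.2 hlt
        intro ht
        have := ENNReal.le_tsum (f := μ) g
        rw [hμ, ht] at this
        exact (by simp at this : False)
    rw [← h1, hx', hsum] at hstrict
    exact lt_irrefl m hstrict
  have hsub : ∀ s : G, μ s ≠ 0 → (s⁻¹ : G) • A ⊆ A := by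
    rintro s hs y ⟨x, hx, rfl⟩
    exact key x hx s hs
  have heq : ∀ s : G, μ s ≠ 0 → (s⁻¹ : G) • A = A := by
    intro s hs
    refine Set.eq_of_subset_of_ncard_le (hsub s hs) ?_ hfin
    have himg : (s⁻¹ : G) • A = (fun x : X => (s⁻¹ : G) • x) '' A := rfl
    rw [himg, Set.ncard_image_of_injective _ (MulAction.injective (s⁻¹ : G))]
  have hgen : ∀ s : G, μ s ≠ 0 → s • A = A := by
    intro s hs
    have := congrArg (fun B : Set X => s • B) (heq s hs)
    simpa [smul_smul] using this.symm
  intro g hg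
  induction hg using Subgroup.closure_induction with
  | mem s hs => exact hgen s hs
  | one => simp
  | mul a b _ _ ha hb => rw [mul_smul, hb, ha]
  | inv a _ ha =>
      have := congrArg (fun B : Set X => (a⁻¹ : G) • B) ha
      simpa using this.symm
end

section
/- Let G be a countable group with a temperate gauge (G_k) (each G_k finite and sup_k (1/k) log|G_k| < ∞). If a probability measure μ on G has finite first moment Σ_g |g| μ(g) < ∞ with respect to the gauge function |·|, then μ has finite Shannon entropy H(μ) = −Σ_g μ(g) log μ(g) < ∞. -/
/-!
Choose `α = C + 1`. The temperate bound `|G_k| ≤ e^{Ck}` makes `g ↦ e^{-α|g|}` summable,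
since its mass on `G_k` is at most `e^{(C - α) k} = e^{-k}`. The pointwise Young-type
inequality `-p log p ≤ α|g| p + e^{-α|g|}` then dominates the entropy series by the first
moment plus this summable series.
-/

open Finset Real

lemma Real.neg_mul_log_le_mul_add_exp_neg {p : ℝ} (hp : 0 ≤ p) (t : ℝ) :
    -(p * log p) ≤ p * t + exp (-t) := by
  rcases hp.eq_or_lt with rfl | hp
  · simpa using (exp_pos (-t)).le
  · have hlog : log (exp (-t) / p) ≤ exp (-t) / p - 1 := log_le_sub_one_of_pos (by positivity)
    rw [log_div (exp_ne_zero _) hp.ne', log_exp] at hlog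
    have hmul := mul_le_mul_of_nonneg_left hlog hp.le
    rw [mul_sub p (exp (-t) / p), mul_one, mul_div_cancel₀ _ hp.ne'] at hmul
    linarith

lemma summable_comp_of_summable_card_mul {ι : Type*} (ν : ι → ℕ) (s : ℕ → Finset ι)
    (hν : ∀ i, i ∈ s (ν i)) {f : ℕ → ℝ} (hf : 0 ≤ f)
    (hsum : Summable fun k => ((s k).card : ℝ) * f k) :
    Summable fun i => f (ν i) := by
  classical
  refine summable_of_sum_le (c := ∑' k, ((s k).card : ℝ) * f k) (fun i => hf (ν i)) fun u => ?_
  have hfiber : ∀ k, ((u.filter fun i => ν i = k).card : ℝ) ≤ (s k).card := fun k => by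
    refine Nat.cast_le.mpr (card_le_card fun i hi => ?_)
    rw [mem_filter] at hi
    exact hi.2 ▸ hν i
  calc ∑ i ∈ u, f (ν i)
      = ∑ k ∈ u.image ν, ((u.filter fun i => ν i = k).card : ℝ) * f k := by
        simp only [sum_comp f ν, nsmul_eq_mul]
    _ ≤ ∑ k ∈ u.image ν, ((s k).card : ℝ) * f k :=
        sum_le_sum fun k _ => mul_le_mul_of_nonneg_right (hfiber k) (hf k)
    _ ≤ ∑' k, ((s k).card : ℝ) * f k :=
        hsum.sum_le_tsum _ fun k _ => mul_nonneg (Nat.cast_nonneg _) (hf k)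

lemma summable_exp_neg_mul_of_card_le_exp {ι : Type*} (ν : ι → ℕ) (s : ℕ → Finset ι)
    (hν : ∀ i, i ∈ s (ν i)) {C : ℝ} (hcard : ∀ k, ((s k).card : ℝ) ≤ exp (C * k)) :
    Summable fun i => exp (-((C + 1) * ν i)) := by
  refine summable_comp_of_summable_card_mul ν s hν (f := fun k : ℕ => exp (-((C + 1) * k)))
    (fun k => (exp_pos _).le) ?_
  have hgeom : Summable fun k : ℕ => exp (-1) ^ k :=
    summable_geometric_of_lt_one (exp_pos _).le (exp_lt_one_iff.mpr (by norm_num))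
  refine hgeom.of_nonneg_of_le (fun k => mul_nonneg (Nat.cast_nonneg _) (exp_pos _).le) fun k => ?_
  calc ((s k).card : ℝ) * exp (-((C + 1) * k))
      ≤ exp (C * k) * exp (-((C + 1) * k)) := mul_le_mul_of_nonneg_right (hcard k) (exp_pos _).le
    _ = exp (-1) ^ k := by rw [← exp_add, ← exp_nat_mul]; ring_nf

lemma summable_neg_mul_log_of_summable_mul_of_summable_exp_neg {ι : Type*} {μ t : ι → ℝ}
    (hpos : ∀ i, 0 ≤ μ i) (hle : ∀ i, μ i ≤ 1) (hmom : Summable fun i => t i * μ i)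
    (hexp : Summable fun i => exp (-t i)) :
    Summable fun i => -(μ i * log (μ i)) :=
  (hmom.add hexp).of_nonneg_of_le (fun i => neg_nonneg.mpr (mul_log_nonpos (hpos i) (hle i)))
    fun i => by
      simpa only [mul_comm (μ i) (t i)] using neg_mul_log_le_mul_add_exp_neg (hpos i) (t i)

theorem finite_first_moment_finite_entropy_general
    {G : Type*}
    (Gk : ℕ → Set G) (hexh : ∀ g : G, ∃ k, g ∈ Gk k)
    (hfin : ∀ k, (Gk k).Finite)
    (C : ℝ) (hC : ∀ k, ((hfin k).toFinset.card : ℝ) ≤ Real.exp (C * k))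
    (μ : G → ℝ) (hpos : ∀ g, 0 ≤ μ g) (hsum : ∑' g, μ g = 1)
    (hmom : Summable (fun g : G => ((sInf {k : ℕ | g ∈ Gk k} : ℕ) : ℝ) * μ g)) :
    Summable (fun g : G => -(μ g * Real.log (μ g))) := by
  set ν : G → ℕ := fun g => sInf {k : ℕ | g ∈ Gk k}
  have hμ : Summable μ := by
    by_contra h
    simp [tsum_eq_zero_of_not_summable h] at hsum
  have hle : ∀ g, μ g ≤ 1 := fun g => hsum ▸ hμ.le_tsum g fun j _ => hpos j
  have hexp : Summable fun g => exp (-((C + 1) * ν g)) :=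
    summable_exp_neg_mul_of_card_le_exp ν (fun k => (hfin k).toFinset)
      (fun g => (hfin _).mem_toFinset.mpr (Nat.sInf_mem (hexh g))) hC
  exact summable_neg_mul_log_of_summable_mul_of_summable_exp_neg hpos hle
    (by simpa only [mul_assoc] using hmom.mul_left (C + 1)) hexp

/-- On a group with a temperate gauge, a probability measure with finite first moment
has finite Shannon entropy. -/
theorem finite_first_moment_finite_entropy
    {G : Type*} [Group G] [Countable G]
    (Gk : ℕ → Set G) (hmono : Monotone Gk) (hexh : ∀ g : G, ∃ k, g ∈ Gk k)
    (hfin : ∀ k, (Gk k).Finite)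
    (C : ℝ) (hC : ∀ k, ((hfin k).toFinset.card : ℝ) ≤ Real.exp (C * k))
    (μ : G → ℝ) (hpos : ∀ g, 0 ≤ μ g) (hsum : ∑' g, μ g = 1)
    (hmom : Summable (fun g : G => ((sInf {k : ℕ | g ∈ Gk k} : ℕ) : ℝ) * μ g)) :
    Summable (fun g : G => -(μ g * Real.log (μ g))) :=
  finite_first_moment_finite_entropy_general Gk hexh hfin C hC μ hpos hsum hmom
end

section
/- In a δ-hyperbolic geodesic metric space with basepoint o, if a sequence (x_n) satisfies d(x_n, x_{n+1}) = o(n) and |x_n|/n → l with l > 0 (where |x| = d(o,x)), then the Gromov products satisfy (x_{n-1}|x_n) = nl + o(n), and consequently (x_n|x_m) → ∞ as n,m → ∞, so (x_n) converges to a point of the Gromov boundary. -/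
/-!
Dividing the Gromov product `(x_n|x_{n+r})` by `n` gives
`(|x_n|/n + |x_{n+r}|/n - d(x_n, x_{n+r})/n)/2 → (l + l - 0)/2 = l` for every fixed `r`, the
middle term because `|x|/n → l` survives a bounded shift and the last one because `r` steps of
size `o(n)` add up to `o(n)`. Hence, once `s` is fixed with `δ < s l/2`, eventually
`(x_n|x_{n+r}) ≥ n l/2` for all `r ≤ s`. Chaining these blocks with the four-point condition
`(x_n|x_{n+d}) ≥ min((x_n|x_{n+s}), (x_{n+s}|x_{n+d})) - δ` costs only one `δ` in total, because
moving the base index from `n` to `n + s` raises the lower bound by `s l/2 > δ`; so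
`(x_n|x_m) ≥ min(n, m) l/2 - δ`, which tends to infinity.
-/

open Filter Topology

noncomputable def gromovProduct {X : Type*} [PseudoMetricSpace X] (o x y : X) : ℝ :=
  (dist o x + dist o y - dist x y) / 2

def IsGromovHyperbolicAt {X : Type*} [PseudoMetricSpace X] (o : X) (δ : ℝ) : Prop :=
  ∀ x y z : X, min (gromovProduct o x y) (gromovProduct o y z) - δ ≤ gromovProduct o x z

section

variable {X : Type*} [PseudoMetricSpace X]

theorem gromovProduct_comm (o x y : X) : gromovProduct o x y = gromovProduct o y x := by
  simp only [gromovProduct, add_comm (dist o x), dist_comm x]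

namespace IsGromovHyperbolicAt

variable {o : X} {δ : ℝ}

theorem nonneg (h : IsGromovHyperbolicAt o δ) : 0 ≤ δ := by
  simpa [gromovProduct] using h o o o

theorem sub_le_gromovProduct_add (h : IsGromovHyperbolicAt o δ) {y : ℕ → X} {a : ℝ} {N s : ℕ}
    (hs : δ < a * s) (hblock : ∀ n ≥ N, ∀ r ≤ s, a * n ≤ gromovProduct o (y n) (y (n + r)))
    (d : ℕ) : ∀ n ≥ N, a * n - δ ≤ gromovProduct o (y n) (y (n + d)) := by
  have hs0 : s ≠ 0 := by
    rintro rfl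
    rw [Nat.cast_zero, mul_zero] at hs
    linarith [h.nonneg]
  induction d using Nat.strong_induction_on with
  | _ d ih =>
    intro n hn
    by_cases hd : d ≤ s
    · linarith [hblock n hn d hd, h.nonneg]
    · have hfirst := hblock n hn s le_rfl
      have hrest := ih (d - s) (by omega) (n + s) (by omega)
      rw [show n + s + (d - s) = n + d by omega, Nat.cast_add] at hrest
      have hmin : a * n ≤ min (gromovProduct o (y n) (y (n + s)))
          (gromovProduct o (y (n + s)) (y (n + d))) := le_min hfirst (by linarith)
      linarith [h (y n) (y (n + s)) (y (n + d))]

theorem tendsto_gromovProduct_atTop (h : IsGromovHyperbolicAt o δ) {y : ℕ → X} {a : ℝ}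
    {N s : ℕ} (ha : 0 < a) (hs : δ < a * s)
    (hblock : ∀ n ≥ N, ∀ r ≤ s, a * n ≤ gromovProduct o (y n) (y (n + r))) :
    Tendsto (fun p : ℕ × ℕ => gromovProduct o (y p.1) (y p.2)) (atTop ×ˢ atTop) atTop := by
  have hmin : Tendsto (fun p : ℕ × ℕ => a * ((p.1 ⊓ p.2 : ℕ) : ℝ) - δ) (atTop ×ˢ atTop) atTop :=
    tendsto_atTop_add_const_right _ _ <| Tendsto.const_mul_atTop ha <|
      tendsto_natCast_atTop_atTop.comp (tendsto_inf_atTop _ tendsto_fst tendsto_snd)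
  refine tendsto_atTop_mono' _ ?_ hmin
  filter_upwards [(eventually_ge_atTop N).prod_mk (eventually_ge_atTop N)]
  rintro ⟨n, m⟩ ⟨hn, hm⟩
  rcases le_total n m with hnm | hmn
  · obtain ⟨d, rfl⟩ := Nat.exists_eq_add_of_le hnm
    simpa [hnm] using h.sub_le_gromovProduct_add hs hblock d n hn
  · obtain ⟨d, rfl⟩ := Nat.exists_eq_add_of_le hmn
    simpa [hmn, gromovProduct_comm o (y m)] using h.sub_le_gromovProduct_add hs hblock d m hm

end IsGromovHyperbolicAt

theorem tendsto_comp_add_div_natCast {f : ℕ → ℝ} {l : ℝ}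
    (hf : Tendsto (fun n : ℕ => f n / n) atTop (𝓝 l)) (r : ℕ) :
    Tendsto (fun n : ℕ => f (n + r) / n) atTop (𝓝 l) := by
  have hshift : Tendsto (fun n : ℕ => f (n + r) / ((n + r : ℕ) : ℝ)) atTop (𝓝 l) :=
    (tendsto_add_atTop_iff_nat r).2 hf
  have hratio : Tendsto (fun n : ℕ => 1 + (r : ℝ) / n) atTop (𝓝 1) := by
    simpa using tendsto_const_nhds.add (tendsto_const_div_atTop_nhds_zero_nat (r : ℝ))
  rw [← mul_one l]
  refine (hshift.mul hratio).congr' ?_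
  filter_upwards [eventually_gt_atTop 0] with n hn
  have hn' : (n : ℝ) ≠ 0 := by positivity
  have hnr : (n : ℝ) + r ≠ 0 := by positivity
  push_cast
  field_simp

theorem tendsto_dist_add_div_natCast {x : ℕ → X}
    (hstep : Tendsto (fun n : ℕ => dist (x n) (x (n + 1)) / n) atTop (𝓝 0)) (r : ℕ) :
    Tendsto (fun n : ℕ => dist (x n) (x (n + r)) / n) atTop (𝓝 0) := by
  induction r with
  | zero => simp
  | succ r ih =>
    refine squeeze_zero (fun n => by positivity) (fun n => ?_)
      (by simpa using ih.add (tendsto_comp_add_div_natCast hstep r))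
    rw [← add_div, ← add_assoc]
    gcongr
    exact dist_triangle _ _ _

theorem tendsto_gromovProduct_add_div_natCast {o : X} {x : ℕ → X} {l : ℝ}
    (hstep : Tendsto (fun n : ℕ => dist (x n) (x (n + 1)) / n) atTop (𝓝 0))
    (hrate : Tendsto (fun n : ℕ => dist o (x n) / n) atTop (𝓝 l)) (r : ℕ) :
    Tendsto (fun n : ℕ => gromovProduct o (x n) (x (n + r)) / n) atTop (𝓝 l) := by
  have h := ((hrate.add (tendsto_comp_add_div_natCast hrate r)).sub
    (tendsto_dist_add_div_natCast hstep r)).div_const 2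
  rw [show (l + l - 0) / 2 = l by ring] at h
  exact h.congr fun n => by simp only [gromovProduct]; ring

end

theorem regular_sequence_converges_to_boundary_general
    {X : Type*} [MetricSpace X] (o : X) (δ : ℝ)
    (hyp : ∀ x y z : X,
      min ((dist o x + dist o y - dist x y) / 2) ((dist o y + dist o z - dist y z) / 2) - δ ≤
        (dist o x + dist o z - dist x z) / 2)
    (x : ℕ → X) (l : ℝ) (hl : 0 < l)
    (hstep : Tendsto (fun n : ℕ => dist (x n) (x (n + 1)) / n) atTop (nhds 0))
    (hrate : Tendsto (fun n : ℕ => dist o (x n) / n) atTop (nhds l)) :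
    Tendsto (fun n : ℕ =>
        (dist o (x n) + dist o (x (n + 1)) - dist (x n) (x (n + 1))) / 2 / n)
      atTop (nhds l) ∧
    Tendsto (fun p : ℕ × ℕ =>
        (dist o (x p.1) + dist o (x p.2) - dist (x p.1) (x p.2)) / 2)
      (atTop ×ˢ atTop) atTop := by
  have hX : IsGromovHyperbolicAt o δ := hyp
  have hprod := tendsto_gromovProduct_add_div_natCast hstep hrate
  refine ⟨hprod 1, ?_⟩
  obtain ⟨s, hs⟩ : ∃ s : ℕ, δ < l / 2 * s := by
    obtain ⟨s, hs⟩ := exists_nat_gt (δ / (l / 2))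
    exact ⟨s, by rwa [div_lt_iff₀' (half_pos hl)] at hs⟩
  have hblock : ∀ᶠ n : ℕ in atTop, ∀ r ∈ Finset.range (s + 1),
      l / 2 * n ≤ gromovProduct o (x n) (x (n + r)) := by
    refine (eventually_all_finset _).2 fun r _ => ?_
    filter_upwards [(hprod r).eventually (eventually_gt_nhds (half_lt_self hl)),
      eventually_gt_atTop 0] with n hn hn0
    exact ((lt_div_iff₀ (by positivity)).1 hn).le
  obtain ⟨N, hN⟩ := eventually_atTop.1 hblock
  exact hX.tendsto_gromovProduct_atTop (half_pos hl) hs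
    fun n hn r hr => hN n hn r (Finset.mem_range_succ_iff.2 hr)

/-- In a δ-hyperbolic space, if `d(x_n, x_{n+1}) = o(n)` and `|x_n|/n → l > 0`, then the
Gromov products `(x_n|x_{n+1})` are `nl + o(n)`, and `(x_n|x_m) → ∞` as `min(n,m) → ∞`,
i.e. `(x_n)` converges to a point of the Gromov boundary. -/
theorem regular_sequence_converges_to_boundary
    {X : Type*} [MetricSpace X] (o : X) (δ : ℝ) (hδ : 0 ≤ δ)
    (hyp : ∀ x y z : X,
      min ((dist o x + dist o y - dist x y) / 2) ((dist o y + dist o z - dist y z) / 2) - δ ≤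
        (dist o x + dist o z - dist x z) / 2)
    (x : ℕ → X) (l : ℝ) (hl : 0 < l)
    (hstep : Tendsto (fun n : ℕ => dist (x n) (x (n + 1)) / n) atTop (nhds 0))
    (hrate : Tendsto (fun n : ℕ => dist o (x n) / n) atTop (nhds l)) :
    Tendsto (fun n : ℕ =>
        (dist o (x n) + dist o (x (n + 1)) - dist (x n) (x (n + 1))) / 2 / n)
      atTop (nhds l) ∧
    Tendsto (fun p : ℕ × ℕ =>
        (dist o (x p.1) + dist o (x p.2) - dist (x p.1) (x p.2)) / 2)
      (atTop ×ˢ atTop) atTop :=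
  regular_sequence_converges_to_boundary_general o δ hyp x l hl hstep hrate
end
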